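/- arXiv:0802.2853 — 2 statements merged into one kernel-verified Lean document; each statement's English description precedes it below -/
import Mathlib

section
/- For any hypermap M = (D, α₀, α₁) with D finite and α₀, α₁ permutations of D, the Euler characteristic χ = v + e + f - d is an even integer, where d, e, v, f are the numbers of darts, edges (orbits of α₀), vertices (orbits of α₁), and faces (orbits of φ = α₁⁻¹ ∘ α₀⁻¹) of M. -/
open Equiv

/-- The setoid on darts given by the cycle (orbit) relation of a permutation. -/
def cycleSetoid {D : Type*} (f : Perm D) : Setoid D :=
  ⟨f.SameCycle, ⟨fun x => Perm.SameCycle.refl f x, Perm.SameCycle.symm, Perm.SameCycle.trans⟩⟩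

/-- Number of orbits (cycles) of a permutation. -/
noncomputable def numCycles {D : Type*} (f : Perm D) : ℕ :=
  Nat.card (Quotient (cycleSetoid f))

/-- The face permutation φ = α₁⁻¹ ∘ α₀⁻¹. -/
def facePerm {D : Type*} (a0 a1 : Perm D) : Perm D := (a0⁻¹).trans (a1⁻¹)

/-- Number of connected components: orbits of the subgroup generated by α₀ and α₁. -/
noncomputable def numComponents {D : Type*} (a0 a1 : Perm D) : ℕ :=
  Nat.card (MulAction.orbitRel.Quotient (Subgroup.closure {a0, a1}) D)

/-- Euler characteristic χ = v + e + f - d. -/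
noncomputable def eulerChar (D : Type*) [Fintype D] (a0 a1 : Perm D) : ℤ :=
  (numCycles a1 : ℤ) + numCycles a0 + numCycles (facePerm a0 a1) - Fintype.card D


/-- Genus g = c - χ/2 (integer division). -/
noncomputable def genusZ (D : Type*) [Fintype D] (a0 a1 : Perm D) : ℤ :=
  (numComponents a0 a1 : ℤ) - eulerChar D a0 a1 / 2

/-- Planarity: genus zero. -/
def PlanarH (D : Type*) [Fintype D] (a0 a1 : Perm D) : Prop := genusZ D a0 a1 = 0
section aux
open Equiv.Perm
variable {D : Type*} [Fintype D] [DecidableEq D]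

noncomputable def cycleQuotEquiv (σ : Perm D) :
    Quotient (cycleSetoid σ) ≃ {x : D // x ∉ σ.support} ⊕ σ.cycleFactorsFinset := by
  classical
  refine Equiv.ofBijective (fun q => Quotient.liftOn q
    (fun x => if h : x ∈ σ.support then
        Sum.inr ⟨σ.cycleOf x, cycleOf_mem_cycleFactorsFinset_iff.mpr h⟩
      else Sum.inl ⟨x, h⟩) ?_) ⟨?_, ?_⟩
  · intro x y (hxy : σ.SameCycle x y)
    by_cases hx : x ∈ σ.support
    · have hy : y ∈ σ.support := by
        have := (mem_support_cycleOf_iff (f := σ)).mpr ⟨hxy, hx⟩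
        exact σ.support_cycleOf_le x this
      simp only [dif_pos hx, dif_pos hy, hxy.cycleOf_eq]
    · have hx' : σ x = x := by simpa using hx
      have : x = y := by
        obtain ⟨n, hn⟩ := hxy
        rw [← hn, zpow_apply_eq_self_of_apply_eq_self hx']
      subst this
      rfl
  · intro a b h
    obtain ⟨x, rfl⟩ := Quotient.exists_rep a
    obtain ⟨y, rfl⟩ := Quotient.exists_rep b
    dsimp only [Quotient.liftOn_mk] at h
    by_cases hx : x ∈ σ.support <;> by_cases hy : y ∈ σ.support
    · rw [dif_pos hx, dif_pos hy] at h
      apply Quotient.sound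
      have hco : σ.cycleOf x = σ.cycleOf y := congrArg Subtype.val (Sum.inr_injective h)
      have : y ∈ (σ.cycleOf x).support := by
        rw [hco]; exact mem_support_cycleOf_iff.mpr ⟨Perm.SameCycle.refl _ _, hy⟩
      exact (mem_support_cycleOf_iff.mp this).1
    · rw [dif_pos hx, dif_neg hy] at h
      exact absurd h (by simp)
    · rw [dif_neg hx, dif_pos hy] at h
      exact absurd h (by simp)
    · rw [dif_neg hx, dif_neg hy] at h
      apply Quotient.sound
      have : x = y := congrArg Subtype.val (Sum.inl_injective h)
      exact this ▸ Perm.SameCycle.refl _ _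
  · rintro (⟨x, hx⟩ | ⟨c, hc⟩)
    · exact ⟨Quotient.mk _ x, dif_neg hx⟩
    · have hcyc : c.IsCycle := (mem_cycleFactorsFinset_iff.mp hc).1
      obtain ⟨x, hx, -⟩ := hcyc
      have hxc : x ∈ c.support := by simpa using hx
      have hxs : x ∈ σ.support := by
        rw [mem_support, ← (mem_cycleFactorsFinset_iff.mp hc).2 x hxc]
        exact hx
      refine ⟨Quotient.mk _ x, ?_⟩
      dsimp only [Quotient.liftOn_mk]
      rw [dif_pos hxs]
      congr 1
      exact Subtype.ext (cycle_is_cycleOf hxc hc).symm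

theorem numCycles_eq (σ : Perm D) :
    (numCycles σ : ℤ) = Fintype.card D - σ.cycleType.sum + σ.cycleType.card := by
  classical
  have h1 : numCycles σ = Nat.card ({x : D // x ∉ σ.support} ⊕ σ.cycleFactorsFinset) :=
    Nat.card_congr (cycleQuotEquiv σ)
  rw [h1, Nat.card_sum]
  have h2 : Nat.card {x : D // x ∉ σ.support} = Fintype.card D - σ.support.card := by
    rw [Nat.card_eq_fintype_card, Fintype.card_subtype_compl]
    congr 1
    exact Fintype.card_coe _
  have h3 : Nat.card σ.cycleFactorsFinset = σ.cycleType.card := by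
    rw [Nat.card_eq_fintype_card, Fintype.card_coe, cycleType_def, Multiset.card_map]
    rfl
  rw [h2, h3, sum_cycleType]
  have hle : σ.support.card ≤ Fintype.card D :=
    (Finset.card_le_univ σ.support).trans_eq Finset.card_univ
  push_cast [Nat.cast_sub hle]
  ring

theorem key_even (a0 a1 : Perm D) :
    Even ((a1.cycleType.sum + a1.cycleType.card) + (a0.cycleType.sum + a0.cycleType.card)
      + ((facePerm a0 a1).cycleType.sum + (facePerm a0 a1).cycleType.card)) := by
  classical
  set φ := facePerm a0 a1 with hφdef
  have h : ((-1 : ℤˣ)) ^ ((a1.cycleType.sum + a1.cycleType.card)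
      + (a0.cycleType.sum + a0.cycleType.card) + (φ.cycleType.sum + φ.cycleType.card))
      = Perm.sign a1 * Perm.sign a0 * Perm.sign φ := by
    rw [pow_add, pow_add, ← sign_of_cycleType, ← sign_of_cycleType, ← sign_of_cycleType]
  have hφ : φ = a1⁻¹ * a0⁻¹ := rfl
  have h2 : Perm.sign a1 * Perm.sign a0 * Perm.sign φ = 1 := by
    rw [hφ, map_mul, map_inv, map_inv, mul_mul_mul_comm, mul_inv_cancel,
      mul_inv_cancel, one_mul]
  rw [h2] at h
  by_contra hodd
  rw [Nat.not_even_iff_odd] at hodd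
  rw [hodd.neg_one_pow] at h
  exact (by decide : ¬ ((-1 : ℤˣ) = 1)) h

end aux

/-- The Euler characteristic of a hypermap is even. -/
theorem euler_char_even {D : Type*} [Fintype D] (a0 a1 : Perm D) :
    Even (eulerChar D a0 a1) := by
  classical
  have h1 := numCycles_eq a1
  have h0 := numCycles_eq a0
  have hf := numCycles_eq (facePerm a0 a1)
  obtain ⟨k, hk⟩ := key_even a0 a1
  rw [eulerChar, h1, h0, hf]
  refine ⟨(Fintype.card D : ℤ) + a1.cycleType.card + a0.cycleType.card
    + (facePerm a0 a1).cycleType.card - k, ?_⟩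
  have : ((a1.cycleType.sum + a1.cycleType.card) + (a0.cycleType.sum + a0.cycleType.card)
      + ((facePerm a0 a1).cycleType.sum + (facePerm a0 a1).cycleType.card) : ℤ) = k + k := by
    exact_mod_cast congrArg Nat.cast hk
  push_cast at this ⊢
  linarith
end

section
/- For any hypermap M, the genus g = c - χ/2 is a nonnegative integer, where c is the number of connected components of M and χ = v + e + f - d its Euler characteristic. -/
open Equiv

/-!
Write α₁ as a product of transpositions, each of which merges two cycles of the permutation it
multiplies. For α₁ = 1 we have v = d and f = c = e, so χ = 2c. Replacing α₁ by (x y)α₁, where x and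
y lie in different cycles of α₁, lowers v by one and replaces α₀α₁ = φ⁻¹ by (α₀x α₀y)α₀α₁, so f
changes by ±1. If the faces split, α₀x and α₀y, hence x and y, were already in one component and
neither χ nor c changes; if they merge, χ drops by 2 and c by at most 1. So both 2 ∣ χ and
χ ≤ 2c persist.

The ±1 law for cycle counts: gluing x and y in the cycle partition of σ or of (x y)σ gives the same
partition, so the two counts differ by at most one, and they differ by an odd number because
sign σ = (-1) ^ (d + #cycles of σ).
-/

namespace Setoid

variable {α : Type*} {s t : Setoid α} {x y : α}

def glue (s : Setoid α) (x y : α) : Setoid α where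
  r a b := s a b ∨ (s a x ∧ s y b) ∨ (s a y ∧ s x b)
  iseqv := by
    refine ⟨fun a => .inl (s.refl a), ?_, ?_⟩
    · rintro a b (h | ⟨h₁, h₂⟩ | ⟨h₁, h₂⟩)
      · exact .inl (s.symm h)
      · exact .inr (.inr ⟨s.symm h₂, s.symm h₁⟩)
      · exact .inr (.inl ⟨s.symm h₂, s.symm h₁⟩)
    · rintro a b c (h | ⟨h₁, h₂⟩ | ⟨h₁, h₂⟩) (h' | ⟨h₁', h₂'⟩ | ⟨h₁', h₂'⟩)
      · exact .inl (s.trans h h')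
      · exact .inr (.inl ⟨s.trans h h₁', h₂'⟩)
      · exact .inr (.inr ⟨s.trans h h₁', h₂'⟩)
      · exact .inr (.inl ⟨h₁, s.trans h₂ h'⟩)
      · exact .inr (.inl ⟨h₁, h₂'⟩)
      · exact .inl (s.trans h₁ h₂')
      · exact .inr (.inr ⟨h₁, s.trans h₂ h'⟩)
      · exact .inl (s.trans h₁ h₂')
      · exact .inr (.inr ⟨h₁, h₂'⟩)

theorem le_glue : s ≤ s.glue x y := fun _ _ => .inl

theorem glue_rel : s.glue x y x y := .inr (.inl ⟨s.refl x, s.refl y⟩)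

theorem glue_le (hst : s ≤ t) (hxy : t x y) : s.glue x y ≤ t := by
  rintro a b (h | ⟨h₁, h₂⟩ | ⟨h₁, h₂⟩)
  · exact hst h
  · exact t.trans (hst h₁) (t.trans hxy (hst h₂))
  · exact t.trans (hst h₁) (t.trans (t.symm hxy) (hst h₂))

theorem glue_eq_self (h : s x y) : s.glue x y = s :=
  le_antisymm (glue_le le_rfl h) le_glue

theorem card_quotient_le_of_le [Finite α] (h : s ≤ t) :
    Nat.card (Quotient t) ≤ Nat.card (Quotient s) :=
  Nat.card_le_card_of_surjective (Quotient.map' id fun _ _ hab => h hab)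
    (Quotient.ind fun a => ⟨⟦a⟧, rfl⟩)

theorem card_quotient_glue_add_one [Finite α] (h : ¬ s x y) :
    Nat.card (Quotient (s.glue x y)) + 1 = Nat.card (Quotient s) := by
  let π : Quotient s → Quotient (s.glue x y) := Quotient.map' id fun _ _ hab => le_glue hab
  let U : Set (Quotient s) := Set.univ \ {⟦y⟧}
  have hinj : U.InjOn π := by
    rintro ⟨a⟩ ha ⟨b⟩ hb hab
    have ha : ¬ s a y := fun h' => ha.2 (Quotient.sound h')
    have hb : ¬ s b y := fun h' => hb.2 (Quotient.sound h')
    obtain hab | ⟨-, h₂⟩ | ⟨h₁, -⟩ := Quotient.exact hab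
    · exact Quotient.sound hab
    · exact absurd (s.symm h₂) hb
    · exact absurd h₁ ha
  have himage : π '' U = Set.univ := by
    refine Set.eq_univ_of_forall (Quotient.ind fun a => ?_)
    by_cases ha : s a y
    · refine ⟨⟦x⟧, ⟨trivial, fun hx => h (Quotient.exact hx)⟩, Quotient.sound ?_⟩
      exact .inr (.inl ⟨s.refl x, s.symm ha⟩)
    · exact ⟨⟦a⟧, ⟨trivial, fun ha' => ha (Quotient.exact ha')⟩, rfl⟩
  rw [← Set.ncard_univ, ← himage, hinj.ncard_image,
    Set.ncard_sdiff_singleton_add_one (Set.mem_univ _), Set.ncard_univ]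

theorem card_quotient_le_card_quotient_glue_add_one [Finite α] :
    Nat.card (Quotient s) ≤ Nat.card (Quotient (s.glue x y)) + 1 := by
  by_cases h : s x y
  · rw [glue_eq_self h]
    exact Nat.le_succ _
  · exact (card_quotient_glue_add_one h).ge

def classStabilizer (s : Setoid α) : Subgroup (Perm α) where
  carrier := {g | ∀ a, s (g a) a}
  one_mem' a := s.refl a
  mul_mem' hg hh a := s.trans (hg _) (hh a)
  inv_mem' {g} hg a := s.symm (by simpa using hg (g⁻¹ a))

theorem classStabilizer_mono (h : s ≤ t) : s.classStabilizer ≤ t.classStabilizer :=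
  fun _ hg a => h (hg a)

theorem swap_mem_classStabilizer_glue [DecidableEq α] :
    swap x y ∈ (s.glue x y).classStabilizer := by
  intro a
  rcases eq_or_ne a x with rfl | hax
  · simpa using (s.glue a y).symm glue_rel
  rcases eq_or_ne a y with rfl | hay
  · simpa using glue_rel
  · rw [swap_apply_of_ne_of_ne hax hay]

end Setoid

section Cycles

open Setoid

variable {α : Type*}

theorem cycleSetoid_le_iff {σ : Perm α} {s : Setoid α} :
    cycleSetoid σ ≤ s ↔ σ ∈ s.classStabilizer := by
  refine ⟨fun h a => h (Perm.sameCycle_apply_left.2 (.refl σ a)), ?_⟩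
  rintro hσ a b ⟨i, rfl⟩
  exact s.symm (zpow_mem hσ i a)

theorem numCycles_inv (σ : Perm α) : numCycles σ⁻¹ = numCycles σ := by
  have : cycleSetoid σ⁻¹ = cycleSetoid σ := Setoid.ext fun _ _ => Perm.sameCycle_inv
  rw [numCycles, numCycles, this]

theorem numCycles_one : numCycles (1 : Perm α) = Nat.card α := by
  have : cycleSetoid (1 : Perm α) = ⊥ := Setoid.ext fun _ _ => Perm.sameCycle_one
  rw [numCycles, this, Nat.card_congr Setoid.quotientBotEquiv]

theorem glue_cycleSetoid_swap_mul [DecidableEq α] (σ : Perm α) (x y : α) :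
    (cycleSetoid (swap x y * σ)).glue x y = (cycleSetoid σ).glue x y := by
  have key (ρ : Perm α) : (cycleSetoid ρ).glue x y ≤ (cycleSetoid (swap x y * ρ)).glue x y := by
    have hτρ : swap x y * ρ ∈ ((cycleSetoid (swap x y * ρ)).glue x y).classStabilizer :=
      classStabilizer_mono le_glue (cycleSetoid_le_iff.1 le_rfl)
    refine glue_le (cycleSetoid_le_iff.2 ?_) glue_rel
    simpa using mul_mem swap_mem_classStabilizer_glue hτρ
  exact le_antisymm (by simpa using key (swap x y * σ)) (key σ)

end Cycles

section Sign

open Setoid Finset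

variable {α : Type*} [Fintype α] [DecidableEq α]

theorem numCycles_eq_card_fixedPoints_add (σ : Perm α) :
    numCycles σ = Fintype.card (Function.fixedPoints σ) + #σ.cycleFactorsFinset := by
  let F (a : α) : Function.fixedPoints σ ⊕ σ.cycleFactorsFinset :=
    if h : σ a = a then .inl ⟨a, h⟩
    else .inr ⟨σ.cycleOf a, Perm.cycleOf_mem_cycleFactorsFinset_iff.2 (Perm.mem_support.2 h)⟩
  have hF (a b : α) : F a = F b ↔ σ.SameCycle a b := by
    by_cases ha : σ a = a <;> by_cases hb : σ b = b <;> simp only [F, ha, hb, dite_true, dite_false]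
    · rw [Sum.inl.injEq, Subtype.ext_iff]
      exact ⟨fun h : a = b => h ▸ .refl σ a, fun h => h.eq_of_left ha⟩
    · simpa using fun h => hb (h.apply_eq_self_iff.1 ha)
    · simpa using fun h => ha (h.apply_eq_self_iff.2 hb)
    · simpa using (Perm.sameCycle_iff_cycleOf_eq_of_mem_support
        (Perm.mem_support.2 ha) (Perm.mem_support.2 hb)).symm
  have hsurj : Function.Surjective F := by
    rintro (⟨a, ha⟩ | ⟨c, hc⟩)
    · exact ⟨a, by simp [F, ha.eq]⟩
    · obtain ⟨a, ha⟩ := (Perm.mem_cycleFactorsFinset_iff.1 hc).1.nonempty_support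
      have hσa : σ a ≠ a := Perm.mem_support.1 (Perm.mem_cycleFactorsFinset_support_le hc ha)
      exact ⟨a, by simp [F, hσa, Perm.cycle_is_cycleOf ha hc]⟩
  let e : Quotient (cycleSetoid σ) ≃ _ :=
    Equiv.ofBijective (Quotient.lift F fun a b h => (hF a b).2 h)
      ⟨Quotient.ind₂ fun a b h => Quotient.sound ((hF a b).1 h),
        fun c => (hsurj c).elim fun a ha => ⟨⟦a⟧, ha⟩⟩
  rw [numCycles, Nat.card_congr e, Nat.card_sum, Nat.card_eq_fintype_card,
    Nat.card_eq_finsetCard]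

theorem sign_eq_neg_one_pow_card_add_numCycles (σ : Perm α) :
    Perm.sign σ = (-1) ^ (Fintype.card α + numCycles σ) := by
  have hcard : Multiset.card σ.cycleType = #σ.cycleFactorsFinset := by
    rw [Perm.cycleType_def, Multiset.card_map]; rfl
  have hexp : Fintype.card α + numCycles σ = σ.cycleType.sum + Multiset.card σ.cycleType
      + 2 * (Fintype.card α - σ.cycleType.sum) := by
    rw [numCycles_eq_card_fixedPoints_add, σ.card_fixedPoints, hcard]
    have := σ.sum_cycleType_le
    omega
  rw [Perm.sign_of_cycleType, hexp, pow_add _ _ (2 * _), pow_mul, neg_one_sq, one_pow, mul_one]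

theorem odd_numCycles_swap_mul_add {x y : α} (hxy : x ≠ y) (σ : Perm α) :
    Odd (numCycles (swap x y * σ) + numCycles σ) := by
  have h := Perm.sign_mul (swap x y) σ
  rw [Perm.sign_swap hxy, sign_eq_neg_one_pow_card_add_numCycles,
    sign_eq_neg_one_pow_card_add_numCycles] at h
  by_contra heven
  rw [Nat.not_odd_iff_even] at heven
  have hpow : (-1 : ℤˣ) ^ (Fintype.card α + numCycles (swap x y * σ))
      = (-1) ^ (Fintype.card α + numCycles σ) := by
    refine neg_one_pow_congr ?_
    simp only [Nat.even_add] at heven ⊢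
    tauto
  rw [hpow, neg_one_mul] at h
  exact units_ne_neg_self _ h

theorem numCycles_eq_card_quotient_glue_add (σ : Perm α) (x y : α) :
    numCycles σ = Nat.card (Quotient ((cycleSetoid σ).glue x y))
      + if σ.SameCycle x y then 0 else 1 := by
  rw [numCycles]
  split_ifs with h
  · rw [glue_eq_self h, add_zero]
  · exact (card_quotient_glue_add_one h).symm

theorem numCycles_swap_mul_of_sameCycle {σ : Perm α} {x y : α} (hxy : x ≠ y)
    (h : σ.SameCycle x y) : numCycles (swap x y * σ) = numCycles σ + 1 := by
  have hσ := numCycles_eq_card_quotient_glue_add σ x y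
  have hτσ := numCycles_eq_card_quotient_glue_add (swap x y * σ) x y
  rw [glue_cycleSetoid_swap_mul] at hτσ
  rw [if_pos h] at hσ
  obtain ⟨k, hk⟩ := odd_numCycles_swap_mul_add hxy σ
  split_ifs at hτσ <;> omega

theorem numCycles_swap_mul_add_one_of_not_sameCycle {σ : Perm α} {x y : α} (hxy : x ≠ y)
    (h : ¬ σ.SameCycle x y) : numCycles (swap x y * σ) + 1 = numCycles σ := by
  have hσ := numCycles_eq_card_quotient_glue_add σ x y
  have hτσ := numCycles_eq_card_quotient_glue_add (swap x y * σ) x y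
  rw [glue_cycleSetoid_swap_mul] at hτσ
  rw [if_neg h] at hσ
  obtain ⟨k, hk⟩ := odd_numCycles_swap_mul_add hxy σ
  split_ifs at hτσ <;> omega

end Sign

section Hypermap

open Setoid MulAction Finset

variable {D : Type*}

theorem orbitRel_closure_le {S : Set (Perm D)} {s : Setoid D} (hS : S ⊆ s.classStabilizer) :
    orbitRel (Subgroup.closure S) D ≤ s := by
  rintro _ b ⟨⟨g, hg⟩, rfl⟩
  exact (Subgroup.closure_le _ |>.2 hS) hg b

theorem le_classStabilizer_orbitRel (G : Subgroup (Perm D)) :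
    G ≤ (orbitRel G D).classStabilizer :=
  fun g hg _ => ⟨⟨g, hg⟩, rfl⟩

theorem numComponents_one (a0 : Perm D) : numComponents a0 1 = numCycles a0 := by
  have : orbitRel (Subgroup.closure {a0, 1}) D = cycleSetoid a0 := by
    refine le_antisymm (orbitRel_closure_le ?_) (cycleSetoid_le_iff.2 ?_)
    · rintro g (rfl | rfl)
      exacts [cycleSetoid_le_iff.1 le_rfl, one_mem _]
    · exact le_classStabilizer_orbitRel _ (Subgroup.subset_closure (by simp))
  rw [numComponents, numCycles, ← this]

theorem orbitRel_closure_swap_mul_le [DecidableEq D] (a0 a1 : Perm D) (x y : D) :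
    orbitRel (Subgroup.closure {a0, swap x y * a1}) D
      ≤ (orbitRel (Subgroup.closure {a0, a1}) D).glue x y := by
  have hK := (le_classStabilizer_orbitRel (Subgroup.closure {a0, a1})).trans
    (classStabilizer_mono (le_glue (x := x) (y := y)))
  refine orbitRel_closure_le ?_
  rintro g (rfl | rfl)
  · exact hK (Subgroup.subset_closure (by simp))
  · exact mul_mem swap_mem_classStabilizer_glue (hK (Subgroup.subset_closure (by simp)))

theorem orbitRel_closure_of_sameCycle_mul {a0 a1 : Perm D} {x y : D}
    (h : (a0 * a1).SameCycle (a0 x) (a0 y)) : orbitRel (Subgroup.closure {a0, a1}) D x y := by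
  set s := orbitRel (Subgroup.closure {a0, a1}) D
  have ha0 : a0 ∈ s.classStabilizer :=
    le_classStabilizer_orbitRel _ (Subgroup.subset_closure (by simp))
  have ha1 : a1 ∈ s.classStabilizer :=
    le_classStabilizer_orbitRel _ (Subgroup.subset_closure (by simp))
  exact s.trans (s.symm (ha0 x)) (s.trans (cycleSetoid_le_iff.2 (mul_mem ha0 ha1) h) (ha0 y))

variable [Fintype D]

theorem eulerChar_eq (a0 a1 : Perm D) :
    eulerChar D a0 a1 = numCycles a1 + numCycles a0 + numCycles (a0 * a1) - Fintype.card D := by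
  rw [eulerChar, facePerm, ← numCycles_inv (a0 * a1)]
  rfl

theorem eulerChar_one (a0 : Perm D) : eulerChar D a0 1 = 2 * numComponents a0 1 := by
  rw [eulerChar_eq, numCycles_one, Nat.card_eq_fintype_card, mul_one, numComponents_one]
  ring

theorem eulerChar_swap_mul [DecidableEq D] {a0 a1 : Perm D} {x y : D} (hxy : x ≠ y)
    (h : ¬ a1.SameCycle x y) (hdvd : 2 ∣ eulerChar D a0 a1)
    (hle : eulerChar D a0 a1 ≤ 2 * numComponents a0 a1) :
    2 ∣ eulerChar D a0 (swap x y * a1) ∧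
      eulerChar D a0 (swap x y * a1) ≤ 2 * numComponents a0 (swap x y * a1) := by
  have hc : Nat.card (Quotient ((orbitRel (Subgroup.closure {a0, a1}) D).glue x y))
      ≤ numComponents a0 (swap x y * a1) :=
    card_quotient_le_of_le (orbitRel_closure_swap_mul_le a0 a1 x y)
  have hv := numCycles_swap_mul_add_one_of_not_sameCycle hxy h
  have hface : a0 * (swap x y * a1) = swap (a0 x) (a0 y) * (a0 * a1) := by
    rw [swap_apply_apply]; group
  have hχ := eulerChar_eq a0 a1
  have hχ' := eulerChar_eq a0 (swap x y * a1)
  rw [hface] at hχ'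
  by_cases hsplit : (a0 * a1).SameCycle (a0 x) (a0 y)
  · have hf := numCycles_swap_mul_of_sameCycle (a0.injective.ne hxy) hsplit
    have hcomp : numComponents a0 a1 ≤ numComponents a0 (swap x y * a1) := by
      rwa [glue_eq_self (orbitRel_closure_of_sameCycle_mul hsplit)] at hc
    constructor <;> omega
  · have hf := numCycles_swap_mul_add_one_of_not_sameCycle (a0.injective.ne hxy) hsplit
    have hcomp : numComponents a0 a1 ≤ numComponents a0 (swap x y * a1) + 1 :=
      card_quotient_le_card_quotient_glue_add_one.trans (Nat.add_le_add_right hc 1)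
    constructor <;> omega

theorem eulerChar_dvd_and_le (a0 a1 : Perm D) :
    2 ∣ eulerChar D a0 a1 ∧ eulerChar D a0 a1 ≤ 2 * numComponents a0 a1 := by
  classical
  induction h : #a1.support using Nat.strong_induction_on generalizing a1 with
  | _ n ih =>
    rcases eq_or_ne a1 1 with rfl | h1
    · rw [eulerChar_one]
      exact ⟨dvd_mul_right 2 _, le_rfl⟩
    obtain ⟨x, hx⟩ : ∃ x, a1 x ≠ x := by simpa using DFunLike.ne_iff.1 h1
    have hfix : (swap x (a1 x) * a1) x = x := by simp
    obtain ⟨hdvd, hle⟩ := ih _ (h ▸ Perm.card_support_swap_mul hx) (swap x (a1 x) * a1) rfl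
    have := eulerChar_swap_mul (Ne.symm hx) (fun hs => hx (hs.eq_of_left hfix).symm) hdvd hle
    rwa [swap_mul_self_mul] at this

end Hypermap

/-- The genus g = c - χ/2 is a nonnegative integer. -/
theorem genus_nonneg {D : Type*} [Fintype D] (a0 a1 : Perm D) :
    (2 : ℤ) ∣ eulerChar D a0 a1 ∧ 0 ≤ genusZ D a0 a1 := by
  obtain ⟨hdvd, hle⟩ := eulerChar_dvd_and_le a0 a1
  exact ⟨hdvd, by rw [genusZ]; omega⟩
end
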